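/- arXiv:1811.08706 — 3 statements merged into one kernel-verified Lean document; each statement's English description precedes it below -/
import Mathlib

section
/- Let 0 ≤ t < T, a > 0, b ∈ ℝ, r₀ ∈ ℝ, and let μ : [t,T] → ℝ be continuous. Define f : [t,T] → ℝ by f(s) = r₀ e^{−a(s−t)} + a ∫_t^s μ(u) e^{−a(s−u)} du − (b²/(2a²)) (1 − e^{−a(s−t)})². Then f is differentiable on (t,T) and for every s ∈ (t,T) one has μ(s) = f(s) + (1/a) f'(s) + (b²/(2a²)) (1 − e^{−2a(s−t)}). -/
/-!
Writing `e^{-a(s-u)} = e^{-as} e^{au}`, the convolution `J(s) = ∫_t^s μ(u) e^{-a(s-u)} du`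
solves `J' = μ - a J` by the fundamental theorem of calculus. Differentiating the formula for
`f` termwise, `f + f'/a` cancels the `r₀` and `J` terms and leaves `μ(s)` together with
`-(b²/(2a²))(1 - E)(1 + E)`, where `E = e^{-a(s-t)}`; and `E² = e^{-2a(s-t)}`.
-/

open MeasureTheory intervalIntegral

namespace HullWhite

noncomputable def forwardCurve (t a b r₀ : ℝ) (μ : ℝ → ℝ) (s : ℝ) : ℝ :=
  r₀ * Real.exp (-a * (s - t))
    + a * (∫ u in t..s, μ u * Real.exp (-a * (s - u)))
    - b ^ 2 / (2 * a ^ 2) * (1 - Real.exp (-a * (s - t))) ^ 2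

theorem integral_mul_exp_neg_mul_sub (μ : ℝ → ℝ) (t a s : ℝ) :
    ∫ u in t..s, μ u * Real.exp (-a * (s - u))
      = Real.exp (-a * s) * ∫ u in t..s, μ u * Real.exp (a * u) := by
  rw [← intervalIntegral.integral_const_mul]
  refine integral_congr fun u _ => ?_
  rw [mul_left_comm, ← Real.exp_add]
  ring_nf

theorem hasDerivAt_exp_neg_mul_sub (a t s : ℝ) :
    HasDerivAt (fun x => Real.exp (-a * (x - t))) (-a * Real.exp (-a * (s - t))) s := by
  simpa [mul_comm] using (((hasDerivAt_id s).sub_const t).const_mul (-a)).exp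

theorem hasDerivAt_integral_mul_exp_neg_mul_sub {μ : ℝ → ℝ} {t T a s : ℝ}
    (hμ : ContinuousOn μ (Set.Icc t T)) (hs : s ∈ Set.Ioo t T) :
    HasDerivAt (fun x => ∫ u in t..x, μ u * Real.exp (-a * (x - u)))
      (μ s - a * ∫ u in t..s, μ u * Real.exp (-a * (s - u))) s := by
  have hcont : ContinuousOn (fun u => μ u * Real.exp (a * u)) (Set.Icc t T) :=
    hμ.mul (by fun_prop)
  have hsub : Set.uIcc t s ⊆ Set.Icc t T := by
    rw [Set.uIcc_of_le hs.1.le]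
    exact Set.Icc_subset_Icc le_rfl hs.2.le
  have hprimitive : HasDerivAt (fun x => ∫ u in t..x, μ u * Real.exp (a * u))
      (μ s * Real.exp (a * s)) s :=
    integral_hasDerivAt_right ((hcont.mono hsub).intervalIntegrable)
      ((hcont.mono Set.Ioo_subset_Icc_self).stronglyMeasurableAtFilter isOpen_Ioo s hs)
      (hcont.continuousAt (Icc_mem_nhds hs.1 hs.2))
  have hexp : HasDerivAt (fun x => Real.exp (-a * x)) (-a * Real.exp (-a * s)) s := by
    simpa [mul_comm] using ((hasDerivAt_id s).const_mul (-a)).exp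
  have hcancel : Real.exp (-a * s) * Real.exp (a * s) = 1 := by
    rw [← Real.exp_add]; simp
  simp only [integral_mul_exp_neg_mul_sub]
  exact (hexp.mul hprimitive).congr_deriv (by linear_combination μ s * hcancel)

theorem hasDerivAt_forwardCurve {μ : ℝ → ℝ} {t T s : ℝ} (a b r₀ : ℝ)
    (hμ : ContinuousOn μ (Set.Icc t T)) (hs : s ∈ Set.Ioo t T) :
    HasDerivAt (forwardCurve t a b r₀ μ)
      (-a * r₀ * Real.exp (-a * (s - t))
        + a * (μ s - a * ∫ u in t..s, μ u * Real.exp (-a * (s - u)))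
        - b ^ 2 / (2 * a ^ 2) * (2 * a * (1 - Real.exp (-a * (s - t))) * Real.exp (-a * (s - t))))
      s := by
  have hE := hasDerivAt_exp_neg_mul_sub a t s
  have hJ := hasDerivAt_integral_mul_exp_neg_mul_sub (a := a) hμ hs
  have hsq := ((hasDerivAt_const s (1 : ℝ)).sub hE).pow 2
  exact (((hE.const_mul r₀).add (hJ.const_mul a)).sub (hsq.const_mul (b ^ 2 / (2 * a ^ 2))))
    |>.congr_deriv (by simp only [Pi.sub_apply]; ring)

theorem exists_hasDerivAt_forwardCurve_and_eq {μ : ℝ → ℝ} {t T a s : ℝ} (b r₀ : ℝ) (ha : a ≠ 0)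
    (hμ : ContinuousOn μ (Set.Icc t T)) (hs : s ∈ Set.Ioo t T) :
    ∃ f' : ℝ, HasDerivAt (forwardCurve t a b r₀ μ) f' s ∧
      μ s = forwardCurve t a b r₀ μ s + (1 / a) * f'
        + b ^ 2 / (2 * a ^ 2) * (1 - Real.exp (-2 * a * (s - t))) := by
  refine ⟨_, hasDerivAt_forwardCurve a b r₀ hμ hs, ?_⟩
  have hsq : Real.exp (-2 * a * (s - t)) = Real.exp (-a * (s - t)) ^ 2 := by
    rw [sq, ← Real.exp_add]; ring_nf
  rw [hsq, forwardCurve]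
  field_simp
  ring

end HullWhite

open HullWhite in
theorem stmt_7_general (t T a b r₀ : ℝ) (ha : 0 < a)
    (μ : ℝ → ℝ) (hμ : ContinuousOn μ (Set.Icc t T))
    (f : ℝ → ℝ)
    (hf : ∀ s ∈ Set.Icc t T, f s =
      r₀ * Real.exp (-a * (s - t))
        + a * (∫ u in t..s, μ u * Real.exp (-a * (s - u)))
        - b ^ 2 / (2 * a ^ 2) * (1 - Real.exp (-a * (s - t))) ^ 2) :
    ∀ s ∈ Set.Ioo t T, ∃ f' : ℝ,
      HasDerivAt f f' s ∧
      μ s = f s + (1 / a) * f' + b ^ 2 / (2 * a ^ 2) * (1 - Real.exp (-2 * a * (s - t))) := by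
  intro s hs
  have hf_eq : f =ᶠ[nhds s] forwardCurve t a b r₀ μ :=
    Filter.mem_of_superset (Icc_mem_nhds hs.1 hs.2) fun x hx => hf x hx
  simp only [hf_eq.hasDerivAt_iff, hf_eq.eq_of_nhds]
  exact exists_hasDerivAt_forwardCurve_and_eq b r₀ ha.ne' hμ hs

/-- Hull–White calibration, deterministic verification: if the forward rate curve `f`
is given by the integral formula in terms of the mean-reversion function `μ`, then `μ`
is recovered from `f` by `μ(s) = f(s) + (1/a) f'(s) + (b²/(2a²))(1 − e^{−2a(s−t)})`. -/
theorem stmt_7 (t T a b r₀ : ℝ) (ht : 0 ≤ t) (htT : t < T) (ha : 0 < a)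
    (μ : ℝ → ℝ) (hμ : ContinuousOn μ (Set.Icc t T))
    (f : ℝ → ℝ)
    (hf : ∀ s ∈ Set.Icc t T, f s =
      r₀ * Real.exp (-a * (s - t))
        + a * (∫ u in t..s, μ u * Real.exp (-a * (s - u)))
        - b ^ 2 / (2 * a ^ 2) * (1 - Real.exp (-a * (s - t))) ^ 2) :
    ∀ s ∈ Set.Ioo t T, ∃ f' : ℝ,
      HasDerivAt f f' s ∧
      μ s = f s + (1 / a) * f' + b ^ 2 / (2 * a ^ 2) * (1 - Real.exp (-2 * a * (s - t))) :=
  stmt_7_general t T a b r₀ ha μ hμ f hf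
end

section
/- Let 0 ≤ t < T, a > 0, b ∈ ℝ, and let f : [t,T] → ℝ be continuously differentiable. Define μ(s) = f(s) + (1/a) f'(s) + (b²/(2a²)) (1 − e^{−2a(s−t)}) and α(s) = f(s) + (b²/(2a²)) (1 − e^{−a(s−t)})² for s ∈ [t,T]. Then for every s ∈ [t,T], a ∫_t^s e^{−a(s−u)} μ(u) du = α(s) − α(t) e^{−a(s−t)}. -/
open MeasureTheory intervalIntegral Set

/-!
Since `e^{-a(s-u)}(a α(u) + α'(u))` is the `u`-derivative of `e^{-a(s-u)} α(u)`, the fundamental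
theorem of calculus gives `∫_t^s e^{-a(s-u)}(a α + α') = α(s) - e^{-a(s-t)} α(t)`. With
`E(u) = e^{-a(u-t)}` one has `α' = f' + (b²/(2a²)) · 2aE(1-E)`, and `(1-E)² + 2E(1-E) = 1 - E²`
shows `a μ = a α + α'`.
-/

theorem integral_exp_mul_add_deriv_eq {α α' : ℝ → ℝ} {a t s : ℝ} (hts : t ≤ s)
    (hα : ∀ u ∈ Icc t s, HasDerivWithinAt α (α' u) (Icc t s) u)
    (hα' : IntervalIntegrable α' volume t s) :
    ∫ u in t..s, Real.exp (-a * (s - u)) * (a * α u + α' u)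
      = α s - Real.exp (-a * (s - t)) * α t := by
  have hexp : ∀ u, HasDerivAt (fun v => Real.exp (-a * (s - v))) (Real.exp (-a * (s - u)) * a) u :=
    fun u => by simpa using (((hasDerivAt_id u).const_sub s).const_mul (-a)).exp
  have hαc : ContinuousOn α (Icc t s) := fun u hu => (hα u hu).continuousWithinAt
  have hderiv : ∀ u ∈ Ioo t s, HasDerivAt (fun v => Real.exp (-a * (s - v)) * α v)
      (Real.exp (-a * (s - u)) * (a * α u + α' u)) u := by
    intro u hu
    have hαu := (hα u (Ioo_subset_Icc_self hu)).hasDerivAt (Icc_mem_nhds hu.1 hu.2)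
    exact ((hexp u).mul hαu).congr_deriv (by ring)
  have hint : IntervalIntegrable (fun u => Real.exp (-a * (s - u)) * (a * α u + α' u)) volume t s :=
    ((hαc.intervalIntegrable_of_Icc hts).const_mul a |>.add hα').continuousOn_mul
      (Continuous.continuousOn (by fun_prop))
  rw [integral_eq_sub_of_hasDerivAt_of_le hts
    ((Continuous.continuousOn (by fun_prop)).mul hαc) hderiv hint]
  simp

theorem hasDerivAt_one_sub_exp_sq (a t u : ℝ) :
    HasDerivAt (fun v => (1 - Real.exp (-a * (v - t))) ^ 2)
      (2 * a * Real.exp (-a * (u - t)) * (1 - Real.exp (-a * (u - t)))) u := by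
  have hE : HasDerivAt (fun v => Real.exp (-a * (v - t))) (Real.exp (-a * (u - t)) * -a) u := by
    simpa using (((hasDerivAt_id u).sub_const t).const_mul (-a)).exp
  exact ((hE.const_sub 1).pow 2).congr_deriv (by ring)

theorem stmt_8_general (t T a b : ℝ) (ha : 0 < a)
    (f f' : ℝ → ℝ)
    (hf : ∀ s ∈ Set.Icc t T, HasDerivWithinAt f (f' s) (Set.Icc t T) s)
    (hf' : ContinuousOn f' (Set.Icc t T))
    (μ α : ℝ → ℝ)
    (hμ : ∀ s, μ s = f s + (1 / a) * f' s
      + b ^ 2 / (2 * a ^ 2) * (1 - Real.exp (-2 * a * (s - t))))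
    (hα : ∀ s, α s = f s + b ^ 2 / (2 * a ^ 2) * (1 - Real.exp (-a * (s - t))) ^ 2) :
    ∀ s ∈ Set.Icc t T,
      a * (∫ u in t..s, Real.exp (-a * (s - u)) * μ u)
        = α s - α t * Real.exp (-a * (s - t)) := by
  rintro s ⟨hts, hsT⟩
  set C := b ^ 2 / (2 * a ^ 2)
  set α' : ℝ → ℝ := fun u =>
    f' u + C * (2 * a * Real.exp (-a * (u - t)) * (1 - Real.exp (-a * (u - t))))
  have hsub : Icc t s ⊆ Icc t T := Icc_subset_Icc_right hsT
  have hderiv : ∀ u ∈ Icc t s, HasDerivWithinAt α (α' u) (Icc t s) u := by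
    intro u hu
    rw [funext hα]
    exact ((hf u (hsub hu)).mono hsub).add
      ((hasDerivAt_one_sub_exp_sq a t u).const_mul C).hasDerivWithinAt
  have hint : IntervalIntegrable α' volume t s :=
    ((hf'.mono hsub).add (Continuous.continuousOn (by fun_prop))).intervalIntegrable_of_Icc hts
  have hμα : ∀ u, a * μ u = a * α u + α' u := by
    intro u
    have hE2 : Real.exp (-2 * a * (u - t)) = Real.exp (-a * (u - t)) ^ 2 := by
      rw [← Real.exp_nat_mul]; ring_nf
    rw [hμ, hα, hE2]
    simp only [α']
    field_simp
    ring
  calc a * (∫ u in t..s, Real.exp (-a * (s - u)) * μ u)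
      = ∫ u in t..s, Real.exp (-a * (s - u)) * (a * α u + α' u) := by
        rw [← intervalIntegral.integral_const_mul]
        congr 1 with u
        rw [← hμα]
        ring
    _ = α s - α t * Real.exp (-a * (s - t)) := by
        rw [integral_exp_mul_add_deriv_eq hts hderiv hint, mul_comm]

/-- Deterministic core of the decomposition lemma for the Hull–White short rate: with
`μ` calibrated from the forward curve `f` and `α` the deterministic part of the short
rate, one has `a ∫_t^s e^{−a(s−u)} μ(u) du = α(s) − α(t) e^{−a(s−t)}`. -/
theorem stmt_8 (t T a b : ℝ) (ht : 0 ≤ t) (htT : t < T) (ha : 0 < a)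
    (f f' : ℝ → ℝ)
    (hf : ∀ s ∈ Set.Icc t T, HasDerivWithinAt f (f' s) (Set.Icc t T) s)
    (hf' : ContinuousOn f' (Set.Icc t T))
    (μ α : ℝ → ℝ)
    (hμ : ∀ s, μ s = f s + (1 / a) * f' s
      + b ^ 2 / (2 * a ^ 2) * (1 - Real.exp (-2 * a * (s - t))))
    (hα : ∀ s, α s = f s + b ^ 2 / (2 * a ^ 2) * (1 - Real.exp (-a * (s - t))) ^ 2) :
    ∀ s ∈ Set.Icc t T,
      a * (∫ u in t..s, Real.exp (-a * (s - u)) * μ u)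
        = α s - α t * Real.exp (-a * (s - t)) :=
  stmt_8_general t T a b ha f f' hf hf' μ α hμ hα
end

section
/- Let h : [0,1] → [0,∞) be a nondecreasing probability density on [0,1] (i.e., ∫_0^1 h(p) dp = 1), let (Ω, 𝓕, P) be a probability space, let X, Y : Ω → ℝ be bounded random variables, and let t ∈ [0,1]. Then ρ_h(law of (t·X + (1−t)·Y)) ≤ t · ρ_h(law of X) + (1−t) · ρ_h(law of Y), where ρ_h(η) = ∫_0^1 V@R_p(η) h(p) dp. (Convexity of spectral risk measures.) -/
/-!
The quantile function `p ↦ V@R_p(η)`, viewed as a random variable on `((0, 1), dp)`, has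
law `η`.
Consequently, for `0 < s < 1` the upper tail integral `∫ₛ¹ V@R_p(η) dp` equals
`min_q ((1 - s) q + E (ξ - q)⁺)` with `ξ ∼ η`, the minimum being attained at `q = V@R_s(η)`;
as `(·)⁺` is convex, this tail integral is a convex function of the random variable.
A nondecreasing spectrum `h ≥ 0` is the superposition `h(p) = ∫₀^{h(1)} 𝟙[y < h(p)] dy` of
indicators of upper level sets, which are intervals `(s, 1)` up to a null set, so `ρ_h` inherits
convexity from the tail integrals.
-/

open MeasureTheory

/-- Value-at-Risk at level `p` of a distribution `η` on ℝ:
`V@R_p(η) = inf { q | η((−∞,q]) ≥ p }`. -/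
noncomputable def VaR (p : ℝ) (η : Measure ℝ) : ℝ :=
  sInf {q : ℝ | p ≤ (η (Set.Iic q)).toReal}

/-- Spectral risk measure with spectrum `h`: `ρ_h(η) = ∫_0^1 V@R_p(η) h(p) dp`. -/
noncomputable def spectralRisk (h : ℝ → ℝ) (η : Measure ℝ) : ℝ :=
  ∫ p in (0 : ℝ)..1, VaR p η * h p

open ProbabilityTheory Set

section Quantile

variable {η : Measure ℝ} {p : ℝ}

lemma nonempty_setOf_le_cdf (hp : p < 1) : {q : ℝ | p ≤ cdf η q}.Nonempty :=
  ((tendsto_cdf_atTop η).eventually (eventually_ge_nhds hp)).exists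

lemma bddBelow_setOf_le_cdf (hp : 0 < p) : BddBelow {q : ℝ | p ≤ cdf η q} := by
  obtain ⟨a, ha⟩ :=
    ((tendsto_cdf_atBot η).eventually (eventually_lt_nhds hp)).exists_forall_of_atBot
  exact ⟨a, fun q hq => le_of_not_ge fun hqa => (ha q hqa).not_ge hq⟩

variable [IsProbabilityMeasure η]

lemma VaR_eq_sInf_cdf : VaR p η = sInf {q | p ≤ cdf η q} := by
  simp only [VaR, cdf_eq_real, measureReal_def]

theorem VaR_le_iff (hp : p ∈ Ioo 0 1) {x : ℝ} : VaR p η ≤ x ↔ p ≤ cdf η x := by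
  rw [VaR_eq_sInf_cdf]
  refine ⟨fun hle => ?_, fun hx => csInf_le (bddBelow_setOf_le_cdf hp.1) hx⟩
  refine ge_of_tendsto (((cdf η).right_continuous x).mono Ioi_subset_Ici_self).tendsto
    (eventually_nhdsWithin_of_forall fun y hy => ?_)
  obtain ⟨q, hq, hqy⟩ := exists_lt_of_csInf_lt (nonempty_setOf_le_cdf hp.2) (hle.trans_lt hy)
  exact hq.trans ((cdf η).mono hqy.le)

theorem monotoneOn_VaR : MonotoneOn (VaR · η) (Ioo 0 1) := fun _ hp _ hp' hpp' =>
  (VaR_le_iff hp).2 (hpp'.trans ((VaR_le_iff hp').1 le_rfl))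

lemma aemeasurable_VaR : AEMeasurable (VaR · η) (volume.restrict (Ioo 0 1)) :=
  aemeasurable_restrict_of_monotoneOn measurableSet_Ioo monotoneOn_VaR

theorem map_VaR_volume : (volume.restrict (Ioo 0 1)).map (VaR · η) = η := by
  refine Measure.ext_of_Iic _ _ fun x => ?_
  have hpre : (VaR · η) ⁻¹' Iic x ∩ Ioo 0 1 = Ioc 0 (cdf η x) \ {1} := by
    ext p
    simp only [mem_inter_iff, mem_preimage, mem_Iic, mem_Ioo, Set.mem_sdiff, mem_Ioc,
      mem_singleton_iff]
    have := cdf_le_one η x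
    constructor
    · rintro ⟨hpx, hp⟩
      exact ⟨⟨hp.1, (VaR_le_iff hp).1 hpx⟩, hp.2.ne⟩
    · rintro ⟨⟨hp0, hpx⟩, hp1⟩
      have hp : p ∈ Ioo 0 1 := ⟨hp0, lt_of_le_of_ne (hpx.trans this) hp1⟩
      exact ⟨(VaR_le_iff hp).2 hpx, hp⟩
  rw [Measure.map_apply_of_aemeasurable aemeasurable_VaR measurableSet_Iic,
    Measure.restrict_apply' measurableSet_Ioo, hpre, measure_sdiff_null (measure_singleton 1),
    Real.volume_Ioc, sub_zero, ofReal_cdf]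

theorem integral_comp_VaR {f : ℝ → ℝ} (hf : AEStronglyMeasurable f η) :
    ∫ p in Ioo 0 1, f (VaR p η) = ∫ x, f x ∂η := by
  rw [← integral_map aemeasurable_VaR (by rwa [map_VaR_volume]), map_VaR_volume]

theorem integrableOn_comp_VaR_iff {f : ℝ → ℝ} (hf : AEStronglyMeasurable f η) :
    IntegrableOn (fun p => f (VaR p η)) (Ioo 0 1) ↔ Integrable f η := by
  have := integrable_map_measure (g := f) (by rwa [map_VaR_volume]) (aemeasurable_VaR (η := η))
  rwa [map_VaR_volume, Iff.comm] at this

end Quantile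

section TailIntegral

variable {η : Measure ℝ} [IsProbabilityMeasure η]

lemma integrableOn_VaR (hη : Integrable (fun x => x) η) : IntegrableOn (VaR · η) (Ioo 0 1) :=
  (integrableOn_comp_VaR_iff (f := fun x => x) aestronglyMeasurable_id).2 hη

lemma integrableOn_max_VaR_sub (hη : Integrable (fun x => x) η) (q : ℝ) :
    IntegrableOn (fun p => max (VaR p η - q) 0) (Ioo 0 1) :=
  (integrableOn_comp_VaR_iff (by fun_prop)).2 (hη.sub (integrable_const q)).pos_part

theorem setIntegral_Ioo_zero_VaR : ∫ p in Ioo 0 1, VaR p η = ∫ x, x ∂η :=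
  integral_comp_VaR (f := fun x => x) aestronglyMeasurable_id

theorem setIntegral_Ioo_VaR_le (hη : Integrable (fun x => x) η) {s : ℝ} (hs : s ∈ Icc 0 1)
    (q : ℝ) : ∫ p in Ioo s 1, VaR p η ≤ (1 - s) * q + ∫ x, max (x - q) 0 ∂η := by
  have hsub : Ioo s 1 ⊆ Ioo 0 1 := Ioo_subset_Ioo_left hs.1
  have hexcess := integrableOn_max_VaR_sub hη q
  have hq : IntegrableOn (fun _ => q) (Ioo s 1) := integrableOn_const measure_Ioo_lt_top.ne
  calc ∫ p in Ioo s 1, VaR p η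
      ≤ ∫ p in Ioo s 1, (q + max (VaR p η - q) 0) :=
        setIntegral_mono_on ((integrableOn_VaR hη).mono_set hsub)
          (hq.add (hexcess.mono_set hsub)) measurableSet_Ioo
          fun p _ => by linarith [le_max_left (VaR p η - q) 0]
    _ = (1 - s) * q + ∫ p in Ioo s 1, max (VaR p η - q) 0 := by
        rw [integral_add hq (hexcess.mono_set hsub),
          setIntegral_const, Real.volume_real_Ioo_of_le hs.2, smul_eq_mul]
    _ ≤ (1 - s) * q + ∫ p in Ioo 0 1, max (VaR p η - q) 0 :=
        add_le_add_right (setIntegral_mono_set hexcess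
          (ae_of_all _ fun p => le_max_right _ _) hsub.eventuallyLE) _
    _ = (1 - s) * q + ∫ x, max (x - q) 0 ∂η := by
        rw [integral_comp_VaR (f := fun x => max (x - q) 0) (by fun_prop)]

theorem setIntegral_Ioo_VaR_eq (hη : Integrable (fun x => x) η) {s : ℝ} (hs : s ∈ Ioo 0 1) :
    (1 - s) * VaR s η + ∫ x, max (x - VaR s η) 0 ∂η = ∫ p in Ioo s 1, VaR p η := by
  have hsub : Ioo s 1 ⊆ Ioo 0 1 := Ioo_subset_Ioo_left hs.1.le
  have hexcess : EqOn (fun p => max (VaR p η - VaR s η) 0)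
      ((Ioo s 1).indicator fun p => VaR p η - VaR s η) (Ioo 0 1) := by
    intro p hp
    dsimp only
    rcases le_or_gt p s with hps | hsp
    · have hp' : p ∉ Ioo s 1 := fun h => (h.1.trans_le hps).false
      rw [indicator_of_notMem hp', max_eq_right]
      linarith [monotoneOn_VaR (η := η) hp hs hps]
    · have hp' : p ∈ Ioo s 1 := ⟨hsp, hp.2⟩
      rw [indicator_of_mem hp', max_eq_left]
      linarith [monotoneOn_VaR (η := η) hs hp hsp.le]
  rw [← integral_comp_VaR (f := fun x => max (x - VaR s η) 0) (by fun_prop),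
    setIntegral_congr_fun measurableSet_Ioo hexcess, setIntegral_indicator measurableSet_Ioo,
    inter_eq_right.2 hsub, integral_sub ((integrableOn_VaR hη).mono_set hsub)
      (integrableOn_const measure_Ioo_lt_top.ne),
    setIntegral_const, Real.volume_real_Ioo_of_le hs.2.le, smul_eq_mul]
  ring

end TailIntegral

section RandomVariable

variable {Ω : Type*} [MeasurableSpace Ω] {P : Measure Ω}

lemma integrable_id_map {X : Ω → ℝ} (hX : Integrable X P) :
    Integrable (fun x => x) (P.map X) :=
  (integrable_map_measure aestronglyMeasurable_id hX.aemeasurable).2 hX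

lemma integral_max_sub_map {X : Ω → ℝ} (hX : Integrable X P) (q : ℝ) :
    ∫ x, max (x - q) 0 ∂(P.map X) = ∫ ω, max (X ω - q) 0 ∂P :=
  integral_map hX.aemeasurable (by fun_prop)

lemma Measurable.integrable_of_abs_le [IsFiniteMeasure P] {X : Ω → ℝ} (hX : Measurable X)
    (hbdd : ∃ M : ℝ, ∀ ω, |X ω| ≤ M) : Integrable X P :=
  let ⟨M, hM⟩ := hbdd
  .of_bound hX.aestronglyMeasurable M (ae_of_all _ hM)

variable [IsProbabilityMeasure P]

lemma integrableOn_VaR_map {X : Ω → ℝ} (hX : Integrable X P) :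
    IntegrableOn (VaR · (P.map X)) (Ioo 0 1) :=
  have := Measure.isProbabilityMeasure_map (μ := P) hX.aemeasurable
  integrableOn_VaR (integrable_id_map hX)

lemma integral_max_add_sub_le {X Y : Ω → ℝ} (hX : Integrable X P) (hY : Integrable Y P)
    {a b : ℝ} (ha : 0 ≤ a) (hb : 0 ≤ b) (qX qY : ℝ) :
    ∫ ω, max (a * X ω + b * Y ω - (a * qX + b * qY)) 0 ∂P
      ≤ a * ∫ ω, max (X ω - qX) 0 ∂P + b * ∫ ω, max (Y ω - qY) 0 ∂P := by
  have hX' : Integrable (fun ω => a * max (X ω - qX) 0) P :=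
    (hX.sub (integrable_const qX)).pos_part.const_mul a
  have hY' : Integrable (fun ω => b * max (Y ω - qY) 0) P :=
    (hY.sub (integrable_const qY)).pos_part.const_mul b
  rw [← integral_const_mul, ← integral_const_mul, ← integral_add hX' hY']
  refine integral_mono
    (((hX.const_mul a).add (hY.const_mul b)).sub (integrable_const _)).pos_part (hX'.add hY')
    fun ω => max_le ?_ (by positivity)
  nlinarith [le_max_left (X ω - qX) 0, le_max_left (Y ω - qY) 0]

theorem setIntegral_Ioo_VaR_map_add_le {X Y : Ω → ℝ} (hX : Integrable X P)
    (hY : Integrable Y P) {a b : ℝ} (ha : 0 ≤ a) (hb : 0 ≤ b) {s : ℝ} (hs : s ∈ Icc 0 1) :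
    ∫ p in Ioo s 1, VaR p (P.map fun ω => a * X ω + b * Y ω)
      ≤ ∫ p in Ioo s 1, (a * VaR p (P.map X) + b * VaR p (P.map Y)) := by
  have hsub : Ioo s 1 ⊆ Ioo 0 1 := Ioo_subset_Ioo_left hs.1
  rw [integral_add (((integrableOn_VaR_map hX).mono_set hsub).const_mul a)
    (((integrableOn_VaR_map hY).mono_set hsub).const_mul b), integral_const_mul,
    integral_const_mul]
  have hZ : Integrable (fun ω => a * X ω + b * Y ω) P := (hX.const_mul a).add (hY.const_mul b)
  have hPX := Measure.isProbabilityMeasure_map (μ := P) hX.aemeasurable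
  have hPY := Measure.isProbabilityMeasure_map (μ := P) hY.aemeasurable
  have hPZ := Measure.isProbabilityMeasure_map (μ := P) hZ.aemeasurable
  rcases hs.1.eq_or_lt with rfl | hs0
  -- at `s = 0` the minimum over `q` need not be attained, but the tail integral is the mean
  · simp only [setIntegral_Ioo_zero_VaR]
    rw [integral_map hZ.aemeasurable (f := fun x => x) aestronglyMeasurable_id,
      integral_map hX.aemeasurable (f := fun x => x) aestronglyMeasurable_id,
      integral_map hY.aemeasurable (f := fun x => x) aestronglyMeasurable_id,
      integral_add (hX.const_mul a) (hY.const_mul b), integral_const_mul, integral_const_mul]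
  rcases hs.2.eq_or_lt with rfl | hs1
  · simp
  rw [← setIntegral_Ioo_VaR_eq (integrable_id_map hX) ⟨hs0, hs1⟩,
    ← setIntegral_Ioo_VaR_eq (integrable_id_map hY) ⟨hs0, hs1⟩,
    integral_max_sub_map hX, integral_max_sub_map hY]
  refine (setIntegral_Ioo_VaR_le (integrable_id_map hZ) hs
    (a * VaR s (P.map X) + b * VaR s (P.map Y))).trans ?_
  rw [integral_max_sub_map hZ]
  linear_combination integral_max_add_sub_le hX hY ha hb (VaR s (P.map X)) (VaR s (P.map Y))

end RandomVariable

section LayerCake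

lemma IsUpperSet.exists_Ioo_inter_ae_eq {S : Set ℝ} (hS : IsUpperSet S) :
    ∃ s ∈ Icc (0 : ℝ) 1, (Ioo 0 1 ∩ S : Set ℝ) =ᵐ[volume] Ioo s 1 := by
  set T := insert 1 (Ioo 0 1 ∩ S)
  have hT : BddBelow T := ⟨0, by rintro p (rfl | hp); exacts [zero_le_one, hp.1.1.le]⟩
  refine ⟨sInf T, ⟨le_csInf (insert_nonempty _ _) ?_, csInf_le hT (mem_insert _ _)⟩, ?_⟩
  · rintro p (rfl | hp)
    exacts [zero_le_one, hp.1.1.le]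
  have hlow : Ioo (sInf T) 1 ⊆ Ioo 0 1 ∩ S := by
    intro p hp
    obtain ⟨r, hr, hrp⟩ := exists_lt_of_csInf_lt (insert_nonempty _ _) hp.1
    rcases hr with rfl | hr
    · exact absurd (hrp.trans hp.2) (lt_irrefl _)
    · exact ⟨⟨hr.1.1.trans hrp, hp.2⟩, hS hrp.le hr.2⟩
  have hup : Ioo 0 1 ∩ S ⊆ Icc (sInf T) 1 := fun p hp =>
    ⟨csInf_le hT (mem_insert_of_mem _ hp), hp.1.2.le⟩
  exact (hup.eventuallyLE.trans Ioo_ae_eq_Icc.symm.le).antisymm hlow.eventuallyLE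

theorem setIntegral_mul_nonpos_of_tail {D w : ℝ → ℝ} (hD : IntegrableOn D (Ioo 0 1))
    (hw : Monotone w) (hw0 : ∀ p, 0 ≤ w p)
    (htail : ∀ s ∈ Icc (0 : ℝ) 1, ∫ p in Ioo s 1, D p ≤ 0) :
    ∫ p in Ioo 0 1, D p * w p ≤ 0 := by
  set F : ℝ × ℝ → ℝ := {z | z.2 < w z.1}.indicator fun z => D z.1
  have hF : Integrable F ((volume.restrict (Ioo 0 1)).prod (volume.restrict (Ioo 0 (w 1)))) :=
    (hD.comp_fst _).indicator
      (measurableSet_lt measurable_snd (hw.measurable.comp measurable_fst))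
  have hinner : ∀ p ∈ Ioo (0 : ℝ) 1, ∫ y in Ioo 0 (w 1), F (p, y) = D p * w p := by
    intro p hp
    have hsec : (fun y => F (p, y)) = (Iio (w p)).indicator fun _ => D p := rfl
    have hIoo : Ioo 0 (w 1) ∩ Iio (w p) = Ioo 0 (w p) := by
      rw [Ioo_inter_Iio, min_eq_right (hw hp.2.le)]
    rw [hsec, setIntegral_indicator measurableSet_Iio, hIoo, setIntegral_const,
      Real.volume_real_Ioo_of_le (hw0 p), sub_zero, smul_eq_mul, mul_comm]
  have hlevel : ∀ y, ∫ p in Ioo 0 1, F (p, y) ≤ 0 := by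
    intro y
    have hupper : IsUpperSet {p | y < w p} := fun _ _ hpq hp => hp.trans_le (hw hpq)
    obtain ⟨s, hs, hae⟩ := hupper.exists_Ioo_inter_ae_eq
    have hsec : (fun p => F (p, y)) = {p | y < w p}.indicator D := rfl
    rw [hsec, setIntegral_indicator (f := D) (measurableSet_lt measurable_const hw.measurable),
      setIntegral_congr_set hae]
    exact htail s hs
  calc ∫ p in Ioo 0 1, D p * w p
      = ∫ p in Ioo 0 1, ∫ y in Ioo 0 (w 1), F (p, y) :=
        setIntegral_congr_fun measurableSet_Ioo fun p hp => (hinner p hp).symm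
    _ = ∫ y in Ioo 0 (w 1), ∫ p in Ioo 0 1, F (p, y) := integral_integral_swap hF
    _ ≤ 0 := integral_nonpos hlevel

lemma integrableOn_mul_of_monotone {f w : ℝ → ℝ} (hf : IntegrableOn f (Ioo 0 1))
    (hw : Monotone w) (hw0 : ∀ p, 0 ≤ w p) : IntegrableOn (fun p => f p * w p) (Ioo 0 1) :=
  hf.mul_bdd hw.measurable.aestronglyMeasurable <| ae_restrict_of_forall_mem measurableSet_Ioo
    fun p hp => by rw [Real.norm_eq_abs, abs_of_nonneg (hw0 p)]; exact hw hp.2.le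

theorem setIntegral_mul_le_of_tail_le {f g w : ℝ → ℝ} (hf : IntegrableOn f (Ioo 0 1))
    (hg : IntegrableOn g (Ioo 0 1)) (hw : Monotone w) (hw0 : ∀ p, 0 ≤ w p)
    (htail : ∀ s ∈ Icc (0 : ℝ) 1, ∫ p in Ioo s 1, f p ≤ ∫ p in Ioo s 1, g p) :
    ∫ p in Ioo 0 1, f p * w p ≤ ∫ p in Ioo 0 1, g p * w p := by
  have hsub : ∀ s ∈ Icc (0 : ℝ) 1, Ioo s 1 ⊆ Ioo 0 1 := fun s hs => Ioo_subset_Ioo_left hs.1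
  have key := setIntegral_mul_nonpos_of_tail (D := fun p => f p - g p) (hf.sub hg) hw hw0
    fun s hs => by
      rw [integral_sub (hf.mono_set (hsub s hs)) (hg.mono_set (hsub s hs))]
      linarith [htail s hs]
  simp_rw [sub_mul] at key
  rw [integral_sub (integrableOn_mul_of_monotone hf hw hw0)
    (integrableOn_mul_of_monotone hg hw hw0)] at key
  linarith

end LayerCake

lemma spectralRisk_eq_setIntegral {h w : ℝ → ℝ} (hw : EqOn w h (Ioo 0 1)) (η : Measure ℝ) :
    spectralRisk h η = ∫ p in Ioo 0 1, VaR p η * w p := by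
  rw [spectralRisk, intervalIntegral.integral_of_le zero_le_one, integral_Ioc_eq_integral_Ioo]
  exact setIntegral_congr_fun measurableSet_Ioo fun p hp => by rw [hw hp]

theorem stmt_19_general (h : ℝ → ℝ) (hpos : ∀ p ∈ Set.Icc (0 : ℝ) 1, 0 ≤ h p)
    (hmono : MonotoneOn h (Set.Icc (0 : ℝ) 1))
    {Ω : Type*} [MeasurableSpace Ω] (P : Measure Ω) [IsProbabilityMeasure P]
    (X Y : Ω → ℝ) (hX : Measurable X) (hY : Measurable Y)
    (hXbdd : ∃ M : ℝ, ∀ ω, |X ω| ≤ M) (hYbdd : ∃ M : ℝ, ∀ ω, |Y ω| ≤ M)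
    (t : ℝ) (ht : t ∈ Set.Icc (0 : ℝ) 1) :
    spectralRisk h (P.map (fun ω => t * X ω + (1 - t) * Y ω))
      ≤ t * spectralRisk h (P.map X) + (1 - t) * spectralRisk h (P.map Y) := by
  have hXi := hX.integrable_of_abs_le (P := P) hXbdd
  have hYi := hY.integrable_of_abs_le (P := P) hYbdd
  set w : ℝ → ℝ := IccExtend zero_le_one fun p : Icc (0 : ℝ) 1 => h p
  have hw : Monotone w := (monotoneOn_iff_monotone.1 hmono).IccExtend zero_le_one
  have hw0 : ∀ p, 0 ≤ w p := fun p => hpos _ (projIcc 0 1 zero_le_one p).2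
  have hwh : EqOn w h (Ioo 0 1) := fun p hp => IccExtend_of_mem _ _ (Ioo_subset_Icc_self hp)
  simp only [spectralRisk_eq_setIntegral hwh]
  calc _ ≤ ∫ p in Ioo 0 1, (t * VaR p (P.map X) + (1 - t) * VaR p (P.map Y)) * w p :=
        setIntegral_mul_le_of_tail_le
          (integrableOn_VaR_map ((hXi.const_mul t).add (hYi.const_mul (1 - t))))
          (((integrableOn_VaR_map hXi).const_mul t).add ((integrableOn_VaR_map hYi).const_mul _))
          hw hw0 fun s hs => setIntegral_Ioo_VaR_map_add_le hXi hYi ht.1 (sub_nonneg.2 ht.2) hs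
    _ = _ := by
        simp_rw [add_mul, mul_assoc]
        rw [integral_add
          ((integrableOn_mul_of_monotone (integrableOn_VaR_map hXi) hw hw0).const_mul t)
          ((integrableOn_mul_of_monotone (integrableOn_VaR_map hYi) hw hw0).const_mul _),
          integral_const_mul, integral_const_mul]

/-- Convexity of spectral risk measures. -/
theorem stmt_19 (h : ℝ → ℝ) (hpos : ∀ p ∈ Set.Icc (0 : ℝ) 1, 0 ≤ h p)
    (hmono : MonotoneOn h (Set.Icc (0 : ℝ) 1))
    (hdens : ∫ p in (0 : ℝ)..1, h p = 1)
    {Ω : Type*} [MeasurableSpace Ω] (P : Measure Ω) [IsProbabilityMeasure P]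
    (X Y : Ω → ℝ) (hX : Measurable X) (hY : Measurable Y)
    (hXbdd : ∃ M : ℝ, ∀ ω, |X ω| ≤ M) (hYbdd : ∃ M : ℝ, ∀ ω, |Y ω| ≤ M)
    (t : ℝ) (ht : t ∈ Set.Icc (0 : ℝ) 1) :
    spectralRisk h (P.map (fun ω => t * X ω + (1 - t) * Y ω))
      ≤ t * spectralRisk h (P.map X) + (1 - t) * spectralRisk h (P.map Y) :=
  stmt_19_general h hpos hmono P X Y hX hY hXbdd hYbdd t ht
end
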